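/- arXiv:2212.12567 — 3 statements merged into one kernel-verified Lean document; each statement's English description precedes it below -/
import Mathlib

section
/- For every non-negative sequence (u_t)_{t=1}^T satisfying u_t ≤ 1 + U_{t-1} for all t∈[T], where U_t = ∑_{k=1}^t u_k (with U_0 = 0), one has ∑_{t=1}^T u_t/(1 + U_{t-1}) ≤ log_2(1 + U_T). -/
/-!
By concavity of `log₂`, `r ≤ log₂ (1 + r)` on `[0, 1]`. Applied to `r = u_t / (1 + U_{t-1}) ∈ [0, 1]`
this bounds each summand by `log₂ (1 + U_t) - log₂ (1 + U_{t-1})`, and the sum telescopes.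
-/

open Finset Real

lemma le_logb_two_one_add {r : ℝ} (h0 : 0 ≤ r) (h1 : r ≤ 1) : r ≤ logb 2 (1 + r) := by
  rw [le_logb_iff_rpow_le one_lt_two (by linarith)]
  simpa [one_add_one_eq_two, mul_one] using rpow_one_add_le_one_add_mul_self (s := 1)
    (by norm_num) h0 h1

lemma div_le_logb_two_add_sub {a x : ℝ} (ha : 0 < a) (hx0 : 0 ≤ x) (hxa : x ≤ a) :
    x / a ≤ logb 2 (a + x) - logb 2 a := by
  have hr : x / a ≤ logb 2 (1 + x / a) :=
    le_logb_two_one_add (div_nonneg hx0 ha.le) ((div_le_one ha).mpr hxa)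
  have hfactor : a + x = a * (1 + x / a) := by field_simp
  rw [hfactor, logb_mul ha.ne' (by positivity)]
  linarith

/-- If a non-negative sequence satisfies `u t ≤ 1 + U (t-1)` where `U t` is the
partial sum of the first `t` terms, then `∑ u t / (1 + U (t-1)) ≤ log₂ (1 + U T)`.
Here `t` ranges over `0, …, T-1`, so `U t = ∑_{k<t} u k` plays the role of `U_{t-1}`. -/
theorem stmt_0 (T : ℕ) (u : ℕ → ℝ)
    (hnonneg : ∀ t < T, 0 ≤ u t)
    (hbound : ∀ t < T, u t ≤ 1 + ∑ k ∈ range t, u k) :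
    ∑ t ∈ range T, u t / (1 + ∑ k ∈ range t, u k) ≤
      Real.logb 2 (1 + ∑ k ∈ range T, u k) := by
  set L : ℕ → ℝ := fun t ↦ logb 2 (1 + ∑ k ∈ range t, u k)
  have hstep : ∀ t ∈ range T, u t / (1 + ∑ k ∈ range t, u k) ≤ L (t + 1) - L t := by
    intro t ht
    have ht : t < T := mem_range.mp ht
    have hU : 0 ≤ ∑ k ∈ range t, u k :=
      sum_nonneg fun k hk ↦ hnonneg k ((mem_range.mp hk).trans ht)
    have h := div_le_logb_two_add_sub (by linarith) (hnonneg t ht) (hbound t ht)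
    simpa only [L, sum_range_succ, add_assoc] using h
  calc ∑ t ∈ range T, u t / (1 + ∑ k ∈ range t, u k)
      ≤ ∑ t ∈ range T, (L (t + 1) - L t) := sum_le_sum hstep
    _ = L T := by rw [sum_range_sub (f := L)]; simp [L]
end

section
/- Consider a rooted forest whose nodes are information sets partitioned by depth into levels X_1,…,X_H, where each node x has a finite nonempty action set of size A(x), and each pair (node x at depth h, action a) leads to a set of children X_{h+1}(x,a) at depth h+1 (empty when h = H). Define A*(x) = ∑_{x' ≥ x} A(x') (sum over the subtree rooted at x), and A_X = ∑_x A(x). Let p* be the balanced transition kernel: p*_0(x_1) = A*(x_1)/A_X for roots x_1, and p*_h(x_{h+1}|x_h,a_h) = A*(x_{h+1}) / ∑_{x' ∈ X_{h+1}(x_h,a_h)} A*(x'), with p*_{1:h}(x_h) the product along the unique path to x_h. Then for any transition kernel p^ν on the forest (i.e., p^ν_0 a probability distribution on roots and p^ν_h(·|x_h,a_h) a probability distribution on X_{h+1}(x_h,a_h), with p^ν_{1:h} the induced path products), one has ∑_{h=1}^H ∑_{x_h ∈ X_h} A(x_h) · p^ν_{1:h}(x_h)/p*_{1:h}(x_h)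 = A_X. -/
open Finset
open scoped Classical

/-- `u` is a child of `v` (via some action `a`). -/
def upRel {X : Type*} (par : X → Option (X × ℕ)) (u v : X) : Prop :=
  ∃ a, par u = some (v, a)

/-- `y` is a descendant of `x` (including `x` itself): `y` reaches `x` by
repeatedly moving to its parent. -/
def isDesc {X : Type*} (par : X → Option (X × ℕ)) (x y : X) : Prop :=
  Relation.ReflTransGen (upRel par) y x

/-- `A*(x)`: the total number of actions in the subtree rooted at `x`. -/
noncomputable def Astar {X : Type*} [Fintype X] (par : X → Option (X × ℕ))
    (A : X → ℕ) (x : X) : ℕ :=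
  ∑ y ∈ Finset.univ.filter (fun y => isDesc par x y), A y

/-- `A_X`: the total number of actions in the forest. -/
def AtotX {X : Type*} [Fintype X] (A : X → ℕ) : ℕ := ∑ x, A x

/-- The children of the pair (node `y`, action `a`). -/
noncomputable def childrenOf {X : Type*} [Fintype X] (par : X → Option (X × ℕ))
    (y : X) (a : ℕ) : Finset X :=
  Finset.univ.filter (fun z => par z = some (y, a))

/-!
The weight `g x = A*(x) · pν(x) / p*(x)` telescopes. Since `p*` splits `p*(y)` among the children
of `(y, a)` in proportion to `A*`, while `pν` conserves mass along each `(y, a)`, the children of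
`y` carry `∑ g = (A*(y) - A(y)) · pν(y) / p*(y)`; that is, `A(y) · pν(y) / p*(y)` is `g y` minus
the sum of `g` over the children of `y`. Summing over all nodes leaves only the roots, where
`g = A_X · pν`, and `pν` has total mass `1` on the roots.
-/

noncomputable def children {X : Type*} [Fintype X] (par : X → Option (X × ℕ)) (y : X) :
    Finset X :=
  univ.filter fun z => ∃ a, par z = some (y, a)

theorem upRel_rightUnique {X : Type*} {par : X → Option (X × ℕ)} :
    Relator.RightUnique (upRel par) := by
  rintro u v w ⟨a, hv⟩ ⟨b, hw⟩
  rw [hv, Option.some_inj, Prod.mk.injEq] at hw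
  exact hw.1

theorem eq_or_dep_lt_of_isDesc {X : Type*} {par : X → Option (X × ℕ)} {dep : X → ℕ}
    (hdep : ∀ x y a, par x = some (y, a) → dep x = dep y + 1) {x y : X} (h : isDesc par x y) :
    y = x ∨ dep x < dep y := by
  induction h using Relation.ReflTransGen.head_induction_on with
  | refl => exact .inl rfl
  | head hyz _ ih =>
    obtain ⟨a, ha⟩ := hyz
    have := hdep _ _ _ ha
    right
    rcases ih with rfl | ih <;> omega

section Forest

variable {X : Type*} [Fintype X] {par : X → Option (X × ℕ)}

theorem Astar_pos {A : X → ℕ} {x : X} (hx : 0 < A x) : 0 < Astar par A x :=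
  hx.trans_le <| single_le_sum (fun _ _ => Nat.zero_le _)
    (mem_filter.2 ⟨mem_univ x, Relation.ReflTransGen.refl⟩)

theorem sum_roots_add_sum_sum_children {M : Type*} [AddCommMonoid M] (f : X → M) :
    ∑ z ∈ univ.filter (fun z => par z = none), f z + ∑ y, ∑ z ∈ children par y, f z
      = ∑ z, f z := by
  have hfiber : ∀ z, ∑ y, (if ∃ a, par z = some (y, a) then f z else 0)
      = if par z = none then 0 else f z := by
    intro z
    rcases hz : par z with _ | ⟨y, a⟩
    · simp
    · rw [sum_eq_single y (fun b _ hb => by simp [Ne.symm hb]) (by simp)]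
      simp
  simp only [children, sum_filter]
  rw [sum_comm, ← sum_add_distrib]
  exact sum_congr rfl fun z _ => by rw [hfiber]; split_ifs <;> simp

theorem sum_eq_sum_roots_of_eq_sub_sum_children {G : Type*} [AddCommGroup G] {f g : X → G}
    (h : ∀ y, f y = g y - ∑ z ∈ children par y, g z) :
    ∑ y, f y = ∑ z ∈ univ.filter (fun z => par z = none), g z := by
  rw [sum_congr rfl fun y _ => h y, sum_sub_distrib, ← sum_roots_add_sum_sum_children g,
    add_sub_cancel_right]

theorem sum_children_eq_sum_range_sum_childrenOf {M : Type*} [AddCommMonoid M] {A : X → ℕ}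
    (hpar : ∀ x y a, par x = some (y, a) → a < A y) (y : X) (f : X → M) :
    ∑ z ∈ children par y, f z = ∑ a ∈ range (A y), ∑ z ∈ childrenOf par y a, f z := by
  rw [← sum_biUnion]
  · refine sum_congr (Finset.ext fun z => ?_) fun _ _ => rfl
    simp only [children, childrenOf, mem_biUnion, mem_range, mem_filter, mem_univ, true_and]
    exact ⟨fun ⟨a, ha⟩ => ⟨a, hpar _ _ _ ha, ha⟩, fun ⟨a, _, ha⟩ => ⟨a, ha⟩⟩
  · intro a _ b _ hab
    refine disjoint_left.2 fun z hza hzb => hab ?_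
    simp only [childrenOf, mem_filter] at hza hzb
    rw [hza.2, Option.some_inj, Prod.mk.injEq] at hzb
    exact hzb.2.2

theorem descendants_eq_insert_biUnion_children (y : X) :
    univ.filter (isDesc par y)
      = insert y ((children par y).biUnion fun z => univ.filter (isDesc par z)) := by
  ext w
  simp only [isDesc, children, mem_filter, mem_insert, mem_biUnion, mem_univ, true_and]
  constructor
  · intro h
    rcases h.cases_tail with rfl | ⟨z, hwz, hzy⟩
    · exact Or.inl rfl
    · exact Or.inr ⟨z, hzy, hwz⟩
  · rintro (rfl | ⟨z, hzy, hwz⟩)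
    · exact .refl
    · exact hwz.tail hzy

theorem pairwiseDisjoint_descendants_children {dep : X → ℕ}
    (hdep : ∀ x y a, par x = some (y, a) → dep x = dep y + 1) (y : X) :
    (children par y : Set X).PairwiseDisjoint fun z => univ.filter (isDesc par z) := by
  intro z hz z' hz' hne
  obtain ⟨a, ha⟩ := (mem_filter.1 hz).2
  obtain ⟨a', ha'⟩ := (mem_filter.1 hz').2
  have hdz := hdep _ _ _ ha
  have hdz' := hdep _ _ _ ha'
  refine disjoint_left.2 fun w hw hw' => hne ?_
  rcases (mem_filter.1 hw).2.total_of_right_unique upRel_rightUnique (mem_filter.1 hw').2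
    with h | h <;>
  rcases eq_or_dep_lt_of_isDesc hdep h with rfl | h <;> first | rfl | omega

theorem Astar_eq_add_sum_children {dep : X → ℕ}
    (hdep : ∀ x y a, par x = some (y, a) → dep x = dep y + 1) (A : X → ℕ) (y : X) :
    Astar par A y = A y + ∑ z ∈ children par y, Astar par A z := by
  have hy : y ∉ (children par y).biUnion fun z => univ.filter (isDesc par z) := by
    simp only [children, mem_biUnion, mem_filter, mem_univ, true_and, not_exists, not_and]
    rintro z ⟨a, ha⟩ hyz
    have := hdep _ _ _ ha
    rcases eq_or_dep_lt_of_isDesc hdep hyz with rfl | h <;> omega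
  rw [Astar, descendants_eq_insert_biUnion_children, sum_insert hy,
    sum_biUnion (pairwiseDisjoint_descendants_children hdep y)]
  rfl

theorem childrenOf_eq_empty_of_le_dep {dep : X → ℕ} {H : ℕ} (hdepH : ∀ x, dep x ≤ H)
    (hdep : ∀ x y a, par x = some (y, a) → dep x = dep y + 1) {y : X} (hy : H ≤ dep y)
    (a : ℕ) : childrenOf par y a = ∅ :=
  eq_empty_of_forall_notMem fun z hz => by
    have := hdep z y a (mem_filter.1 hz).2
    have := hdepH z
    omega

end Forest

theorem sum_mul_div_of_eq_mul_div {ι : Type*} {s : Finset ι} {c p q : ι → ℝ} {r : ℝ}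
    (hc : ∀ i ∈ s, c i ≠ 0) (hq : ∀ i ∈ s, q i = r * (c i / ∑ j ∈ s, c j)) :
    ∑ i ∈ s, c i * p i / q i = (∑ i ∈ s, c i) * (∑ i ∈ s, p i) / r := by
  rw [mul_sum, sum_div]
  refine sum_congr rfl fun i hi => ?_
  rw [hq i hi, mul_div_assoc', div_div_eq_mul_div, mul_right_comm, mul_comm r, mul_assoc,
    mul_div_mul_left _ _ (hc i hi)]

theorem stmt_6_general {X : Type*} [Fintype X]
    (H : ℕ) (dep : X → ℕ) (A : X → ℕ) (par : X → Option (X × ℕ))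
    (hdep : ∀ x, 1 ≤ dep x ∧ dep x ≤ H)
    (hApos : ∀ x, 1 ≤ A x)
    (hpar : ∀ x y a, par x = some (y, a) → dep x = dep y + 1 ∧ a < A y)
    (pstar : X → ℝ)
    (hpstar_root : ∀ x, par x = none → pstar x = (Astar par A x : ℝ) / (AtotX A : ℝ))
    (hpstar_step : ∀ x y a, par x = some (y, a) →
      pstar x = pstar y *
        ((Astar par A x : ℝ) / ∑ z ∈ childrenOf par y a, (Astar par A z : ℝ)))
    (pnu : X → ℝ)
    (hpnu_root : ∑ x ∈ Finset.univ.filter (fun x => par x = none), pnu x = 1)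
    (hpnu_step : ∀ x a, dep x < H → a < A x →
      ∑ z ∈ childrenOf par x a, pnu z = pnu x) :
    ∑ x, (A x : ℝ) * pnu x / pstar x = (AtotX A : ℝ) := by
  have hdep_succ : ∀ x y a, par x = some (y, a) → dep x = dep y + 1 :=
    fun x y a h => (hpar x y a h).1
  have hAstar : ∀ x, (Astar par A x : ℝ) ≠ 0 :=
    fun x => by exact_mod_cast (Astar_pos (hApos x)).ne'
  let g : X → ℝ := fun x => Astar par A x * pnu x / pstar x
  have hflow : ∀ y, ∀ a < A y, ∑ z ∈ childrenOf par y a, g z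
      = (∑ z ∈ childrenOf par y a, (Astar par A z : ℝ)) * pnu y / pstar y := by
    intro y a ha
    rw [sum_mul_div_of_eq_mul_div (fun z _ => hAstar z)
      fun z hz => hpstar_step z y a (mem_filter.1 hz).2]
    rcases lt_or_ge (dep y) H with hy | hy
    · rw [hpnu_step y a hy ha]
    · simp [childrenOf_eq_empty_of_le_dep (fun x => (hdep x).2) hdep_succ hy]
  have htelescope : ∀ y, (A y : ℝ) * pnu y / pstar y = g y - ∑ z ∈ children par y, g z := by
    intro y
    have hAstar_y := congrArg (Nat.cast : ℕ → ℝ) (Astar_eq_add_sum_children hdep_succ A y)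
    rw [sum_children_eq_sum_range_sum_childrenOf (fun x y a h => (hpar x y a h).2)]
      at hAstar_y ⊢
    push_cast at hAstar_y
    rw [sum_congr rfl fun a ha => hflow y a (mem_range.1 ha), ← sum_div, ← sum_mul]
    simp only [g, hAstar_y]
    ring
  rw [sum_eq_sum_roots_of_eq_sub_sum_children htelescope, ← mul_one (AtotX A : ℝ), ← hpnu_root,
    mul_sum]
  refine sum_congr rfl fun x hx => ?_
  dsimp only [g]
  rw [hpstar_root x (mem_filter.1 hx).2, div_div_eq_mul_div, mul_right_comm,
    mul_assoc, mul_div_cancel_left₀ _ (hAstar x)]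

/-- Balanced-transition identity: on a rooted forest of depth `H` with perfect
recall (levels `X_h`, action sets of size `A x`, parent map `par`), with `p*`
the balanced transition path product and `pν` the path product of any
transition kernel, `∑_{h=1}^H ∑_{x ∈ X_h} A(x)·pν(x)/p*(x) = A_X`; the double
sum over depths collapses to the sum over all nodes. -/
theorem stmt_6 {X : Type*} [Fintype X]
    (H : ℕ) (hH : 1 ≤ H) (dep : X → ℕ) (A : X → ℕ) (par : X → Option (X × ℕ))
    (hdep : ∀ x, 1 ≤ dep x ∧ dep x ≤ H)
    (hApos : ∀ x, 1 ≤ A x)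
    (hroot : ∀ x, par x = none ↔ dep x = 1)
    (hpar : ∀ x y a, par x = some (y, a) → dep x = dep y + 1 ∧ a < A y)
    (hchild : ∀ x a, dep x < H → a < A x → ∃ y, par y = some (x, a))
    (pstar : X → ℝ)
    (hpstar_root : ∀ x, par x = none → pstar x = (Astar par A x : ℝ) / (AtotX A : ℝ))
    (hpstar_step : ∀ x y a, par x = some (y, a) →
      pstar x = pstar y *
        ((Astar par A x : ℝ) / ∑ z ∈ childrenOf par y a, (Astar par A z : ℝ)))
    (pnu : X → ℝ) (hpnu_nonneg : ∀ x, 0 ≤ pnu x)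
    (hpnu_root : ∑ x ∈ Finset.univ.filter (fun x => par x = none), pnu x = 1)
    (hpnu_step : ∀ x a, dep x < H → a < A x →
      ∑ z ∈ childrenOf par x a, pnu z = pnu x) :
    ∑ x, (A x : ℝ) * pnu x / pstar x = (AtotX A : ℝ) :=
  stmt_6_general H dep A par hdep hApos hpar pstar hpstar_root hpstar_step pnu hpnu_root hpnu_step
end

section
/- Implicit-exploration per-step inequality: Let μ ∈ (0,1], γ' > 0, γ ≥ γ', r ∈ [0,1] and let b ∈ {0,1}. Define the IX loss estimate ℓ̃ = b·(1-r)/(μ + γ) and the importance-sampled estimate ℓ̂ = b·(1-r)/μ. Then 2γ'·ℓ̃ ≤ log(1 + 2γ'·ℓ̂). -/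
open Real

/-- With `z = 2a/μ`, the left side is at most `2a/(μ + a) = 2z/(z + 2)`, the Padé-type lower
bound for `log (1 + z)`. -/
lemma two_mul_div_add_le_log_one_add {μ a γ : ℝ} (hμ : 0 < μ) (ha : 0 ≤ a) (haγ : a ≤ γ) :
    2 * a / (μ + γ) ≤ log (1 + 2 * a / μ) :=
  calc 2 * a / (μ + γ) ≤ 2 * a / (μ + a) := by gcongr
    _ = 2 * (2 * a / μ) / (2 * a / μ + 2) := by field_simp; ring
    _ ≤ log (1 + 2 * a / μ) := le_log_one_add_of_nonneg (by positivity)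

theorem stmt_12_general (μ γ γ' r b : ℝ) (hμ0 : 0 < μ)
    (hγ' : 0 < γ') (hγ : γ' ≤ γ) (hr0 : 0 ≤ r) (hr1 : r ≤ 1)
    (hb : b = 0 ∨ b = 1) :
    2 * γ' * (b * (1 - r) / (μ + γ)) ≤ Real.log (1 + 2 * γ' * (b * (1 - r) / μ)) := by
  have hloss : 0 ≤ b * (1 - r) ∧ b * (1 - r) ≤ 1 := by
    rcases hb with rfl | rfl <;> constructor <;> linarith
  have key := two_mul_div_add_le_log_one_add hμ0 (mul_nonneg hγ'.le hloss.1)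
    ((mul_le_of_le_one_right hγ'.le hloss.2).trans hγ)
  simpa only [mul_div_assoc, mul_assoc] using key

/-- Implicit-exploration per-step inequality: for `μ ∈ (0,1]`, `0 < γ' ≤ γ`,
`r ∈ [0,1]` and an indicator `b ∈ {0,1}`, with `ℓ̃ = b(1-r)/(μ+γ)` and
`ℓ̂ = b(1-r)/μ`, one has `2γ'ℓ̃ ≤ log(1 + 2γ'ℓ̂)`. -/
theorem stmt_12 (μ γ γ' r b : ℝ) (hμ0 : 0 < μ) (hμ1 : μ ≤ 1)
    (hγ' : 0 < γ') (hγ : γ' ≤ γ) (hr0 : 0 ≤ r) (hr1 : r ≤ 1)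
    (hb : b = 0 ∨ b = 1) :
    2 * γ' * (b * (1 - r) / (μ + γ)) ≤ Real.log (1 + 2 * γ' * (b * (1 - r) / μ)) :=
  stmt_12_general μ γ γ' r b hμ0 hγ' hγ hr0 hr1 hb
end
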